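/- Let f = x² − y³·5⁷·(y−2)⁴ ∈ ℤ[x,y]. Then for every prime ideal P of ℤ[x,y]: (a) f has order ≥ 2 at P (i.e., the image of f in the localization at P lies in the square of the ideal generated by the image of P) if and only if {x, y} ⊆ P or {x, 5} ⊆ P or {x, y−2} ⊆ P; and (b) f never has order ≥ 3 at P. Consequently the maximal order of the hypersurface V(f) over Spec ℤ is 2, and its locus of maximal order is V(x,y) ∪ V(x,5) ∪ V(x,y−2), where V(x,y) and V(x,y−2) are horizontal components and V(x,5) is a vertical component above the prime 5. -/

import Mathlib

open MvPolynomial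

/-- `f` has order `≥ n` at the prime ideal `P`: the image of `f` in the
localization `B_P` lies in the `n`-th power of the ideal generated by the
image of `P`. -/
def hasOrderGE {B : Type*} [CommRing B] (f : B) (P : Ideal B) [P.IsPrime]
    (n : ℕ) : Prop :=
  algebraMap B (Localization.AtPrime P) f ∈
    (P.map (algebraMap B (Localization.AtPrime P))) ^ n

section Aux

variable {B : Type*} [CommRing B]

/-- Order `≥ n` is equivalent to membership in the `n`-th symbolic power. -/
lemma hasOrderGE_iff_aux [IsDomain B] (f : B) (P : Ideal B) [P.IsPrime] (n : ℕ) :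
    hasOrderGE f P n ↔ ∃ s ∉ P, s * f ∈ P ^ n := by
  unfold hasOrderGE
  rw [← Ideal.map_pow]
  rw [IsLocalization.mem_map_algebraMap_iff P.primeCompl (Localization.AtPrime P)]
  constructor
  · rintro ⟨⟨a, s⟩, h⟩
    refine ⟨s, s.2, ?_⟩
    have hinj := IsLocalization.injective (Localization.AtPrime P)
      P.primeCompl_le_nonZeroDivisors
    have : algebraMap B (Localization.AtPrime P) (s * f) =
        algebraMap B (Localization.AtPrime P) a := by
      rw [map_mul, mul_comm]; exact h
    rw [hinj this]; exact a.2
  · rintro ⟨s, hs, hsf⟩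
    refine ⟨⟨⟨s * f, hsf⟩, ⟨s, hs⟩⟩, ?_⟩
    simp [map_mul, mul_comm]

lemma deriv_mem_of_mem_sq {I : Ideal B} {h : B} (hh : h ∈ I ^ 2)
    (D : Derivation ℤ B B) : D h ∈ I := by
  rw [pow_two] at hh
  refine Submodule.mul_induction_on hh ?_ ?_
  · intro a ha b hb
    rw [D.leibniz, smul_eq_mul, smul_eq_mul]
    exact add_mem (I.mul_mem_right _ ha) (I.mul_mem_right _ hb)
  · intro x y hx hy
    rw [map_add]; exact add_mem hx hy

lemma deriv_mem_of_mem_cube {I : Ideal B} {h : B} (hh : h ∈ I ^ 3)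
    (D : Derivation ℤ B B) : D h ∈ I ^ 2 := by
  rw [pow_succ] at hh
  refine Submodule.mul_induction_on hh ?_ ?_
  · intro a ha b hb
    rw [D.leibniz, smul_eq_mul, smul_eq_mul]
    have h1 : a * D b ∈ I ^ 2 := Ideal.mul_mem_right _ _ ha
    have h2 : b * D a ∈ I ^ 2 := by
      rw [pow_two]
      exact Ideal.mul_mem_mul hb (deriv_mem_of_mem_sq ha D)
    exact add_mem h1 h2
  · intro x y hx hy
    rw [map_add]; exact add_mem hx hy

lemma sq_deriv {P : Ideal B} [P.IsPrime] {g s : B} (hs : s ∉ P)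
    (h : s * g ∈ P ^ 2) (D : Derivation ℤ B B) : D g ∈ P := by
  have hg : g ∈ P := by
    have hsg : s * g ∈ P := Ideal.pow_le_self two_ne_zero h
    exact ((Ideal.IsPrime.mem_or_mem ‹P.IsPrime› hsg).resolve_left hs)
  have h1 : D (s * g) ∈ P := deriv_mem_of_mem_sq h D
  rw [D.leibniz, smul_eq_mul, smul_eq_mul] at h1
  have h2 : s * D g ∈ P := by
    have := P.sub_mem h1 (P.mul_mem_right (D s) hg)
    simpa using this
  exact ((Ideal.IsPrime.mem_or_mem ‹P.IsPrime› h2).resolve_left hs)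

lemma cube_deriv {P : Ideal B} [P.IsPrime] {g s : B} (hs : s ∉ P)
    (h : s * g ∈ P ^ 3) (D : Derivation ℤ B B) : s ^ 2 * D g ∈ P ^ 2 := by
  have h1 : D (s * g) ∈ P ^ 2 := deriv_mem_of_mem_cube h D
  rw [D.leibniz, smul_eq_mul, smul_eq_mul] at h1
  have h2 : s * (s * D g + g * D s) ∈ P ^ 2 := Ideal.mul_mem_left _ _ h1
  have h3 : (s * g) * D s ∈ P ^ 2 :=
    Ideal.mul_mem_right _ _ (Ideal.pow_le_pow_right (by norm_num) h)
  have h4 := (P ^ 2).sub_mem h2 h3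
  have he : s * (s * D g + g * D s) - s * g * D s = s ^ 2 * D g := by ring
  rwa [he] at h4

lemma second_deriv_mem {P : Ideal B} [P.IsPrime] {g s : B} (hs : s ∉ P)
    (h : s * g ∈ P ^ 3) (D D' : Derivation ℤ B B) : D' (D g) ∈ P := by
  have h1 : s ^ 2 * D g ∈ P ^ 2 := cube_deriv hs h D
  have hs2 : s ^ 2 ∉ P := fun hc =>
    hs ((Ideal.IsPrime.mem_or_mem ‹P.IsPrime› (by rwa [pow_two] at hc)).elim id id)
  exact sq_deriv hs2 h1 D'

lemma mem_sq_of_mul {P : Ideal B} {a b c : B} (ha : a ∈ P) (hb : b ∈ P) :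
    a * b * c ∈ P ^ 2 := by
  rw [pow_two]
  exact Ideal.mul_mem_right c _ (Ideal.mul_mem_mul ha hb)

end Aux

section Poly

lemma pderiv_two' {σ R : Type*} [CommSemiring R] (i : σ) :
    pderiv i (2 : MvPolynomial σ R) = 0 := by
  rw [show (2 : MvPolynomial σ R) = C 2 from (map_ofNat C 2).symm, pderiv_C]

lemma pderiv_five' {σ R : Type*} [CommSemiring R] (i : σ) :
    pderiv i (5 : MvPolynomial σ R) = 0 := by
  rw [show (5 : MvPolynomial σ R) = C 5 from (map_ofNat C 5).symm, pderiv_C]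

/-- The base ring `ℤ[x,y]`. -/
abbrev Bpoly := MvPolynomial (Fin 2) ℤ

/-- The polynomial of the example. -/
noncomputable def fpoly : Bpoly := (X 0) ^ 2 - (X 1) ^ 3 * 5 ^ 7 * (X 1 - 2) ^ 4

lemma pd0 : pderiv 0 fpoly = 2 * X 0 := by
  unfold fpoly
  simp [pderiv_X, Pi.single_apply, pderiv_two', pderiv_five']

lemma pd1 : pderiv 1 fpoly =
    -(3 * 5 ^ 7 * (X 1) ^ 2 * (X 1 - 2) ^ 4 + 4 * 5 ^ 7 * (X 1) ^ 3 * (X 1 - 2) ^ 3) := by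
  unfold fpoly
  simp [pderiv_X, Pi.single_apply, pderiv_two', pderiv_five']
  ring

lemma pd00 : pderiv 0 (pderiv 0 fpoly) = 2 := by
  rw [pd0]
  simp [pderiv_X, Pi.single_apply, pderiv_two']

/-- The maximal ideal `(2, x, y)`. -/
noncomputable def mIdeal : Ideal Bpoly := Ideal.span {2, X 0, X 1}

/-- Reduction `ℤ[x,y] → 𝔽₂` at the origin. -/
noncomputable def Psi : Bpoly →+* ZMod 2 :=
  (Int.castRingHom (ZMod 2)).comp constantCoeff

lemma ker_Psi_le : RingHom.ker Psi ≤ mIdeal := by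
  intro p hp
  have h2 : ((constantCoeff p : ℤ) : ZMod 2) = 0 := hp
  have hdvd : (2 : ℤ) ∣ constantCoeff p := by
    rwa [ZMod.intCast_zmod_eq_zero_iff_dvd] at h2
  obtain ⟨k, hk⟩ := hdvd
  have hC : C (constantCoeff p) ∈ mIdeal := by
    rw [hk]
    have : (C (2 * k) : Bpoly) = 2 * C k := by
      rw [map_mul]; norm_num
    rw [this]
    exact Ideal.mul_mem_right _ _ (Ideal.subset_span (by simp))
  have hq : p - C (constantCoeff p) ∈
      Ideal.span (X '' (Set.univ : Set (Fin 2)) : Set Bpoly) := by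
    rw [mem_ideal_span_X_image]
    intro m hm
    by_contra hcon
    push_neg at hcon
    have hm0 : m = 0 := by
      ext i
      simpa using hcon i
    rw [mem_support_iff, hm0] at hm
    apply hm
    simp [coeff_sub, coeff_zero_C, ← constantCoeff_eq]
  have hXle : Ideal.span (X '' (Set.univ : Set (Fin 2)) : Set Bpoly) ≤ mIdeal := by
    rw [Ideal.span_le]
    rintro _ ⟨i, -, rfl⟩
    fin_cases i
    · exact Ideal.subset_span (by simp)
    · exact Ideal.subset_span (by simp)
  have := add_mem hC (hXle hq)
  simpa using this

lemma P_eq_m (P : Ideal Bpoly) [P.IsPrime] (h2 : (2 : Bpoly) ∈ P)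
    (hx : X 0 ∈ P) (hy : X 1 ∈ P) : P = mIdeal := by
  have hmP : mIdeal ≤ P := by
    rw [mIdeal, Ideal.span_le]
    rintro q hq
    simp only [Set.mem_insert_iff, Set.mem_singleton_iff] at hq
    rcases hq with rfl | rfl | rfl <;> assumption
  refine le_antisymm ?_ hmP
  intro p hp
  have hcases : ∀ u : ZMod 2, u = 0 ∨ u = 1 := by decide
  rcases hcases (Psi p) with h | h
  · exact ker_Psi_le h
  · exfalso
    have h1 : Psi (p - 1) = 0 := by rw [map_sub, map_one, h, sub_self]
    have hsub : p - 1 ∈ P := hmP (ker_Psi_le h1)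
    have hone : (1 : Bpoly) ∈ P := by
      have := P.sub_mem hp hsub
      simpa using this
    exact (Ideal.IsPrime.ne_top ‹P.IsPrime›) ((Ideal.eq_top_iff_one P).2 hone)

/-- Evaluation `x ↦ 2, y ↦ 2` into `ℤ/8`. -/
noncomputable def Phi : Bpoly →+* ZMod 8 :=
  eval₂Hom (Int.castRingHom (ZMod 8)) (fun _ => 2)

lemma not_sf_mem_m_cubed (s : Bpoly) (hs : s ∉ mIdeal) : s * fpoly ∉ mIdeal ^ 3 := by
  intro hmem
  have hmap : Ideal.map Phi mIdeal ≤ Ideal.span {(2 : ZMod 8)} := by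
    rw [Ideal.map_le_iff_le_comap, mIdeal, Ideal.span_le]
    rintro q hq
    simp only [Set.mem_insert_iff, Set.mem_singleton_iff] at hq
    rcases hq with rfl | rfl | rfl <;>
      · simp only [Ideal.mem_comap, Phi, map_ofNat, eval₂Hom_X']
        exact Ideal.subset_span (by norm_num)
  have hcube : Ideal.map Phi (mIdeal ^ 3) = ⊥ := by
    rw [Ideal.map_pow]
    have h1 : (Ideal.map Phi mIdeal) ^ 3 ≤ Ideal.span {(2 : ZMod 8)} ^ 3 :=
      Ideal.pow_right_mono hmap 3
    rw [Ideal.span_singleton_pow] at h1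
    have h2 : ((2 : ZMod 8)) ^ 3 = 0 := by decide
    rw [h2, Ideal.span_singleton_eq_bot.mpr rfl] at h1
    exact le_bot_iff.mp h1
  have h0 : Phi (s * fpoly) = 0 := by
    have := Ideal.mem_map_of_mem Phi hmem
    rw [hcube] at this
    simpa using this
  have hf4 : Phi fpoly = 4 := by
    rw [fpoly]
    simp only [Phi, map_sub, map_mul, map_pow, map_ofNat, eval₂Hom_X']
    decide
  have hchi : (ZMod.castHom (by norm_num : (2 : ℕ) ∣ 8) (ZMod 2)).comp Phi = Psi := by
    apply MvPolynomial.ringHom_ext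
    · intro a
      simp [Phi, Psi]
    · intro i
      simp [Phi, Psi]
      decide
  have hPsi : Psi s ≠ 0 := fun h => hs (ker_Psi_le h)
  have hodd : (ZMod.castHom (by norm_num : (2 : ℕ) ∣ 8) (ZMod 2)) (Phi s) ≠ 0 := by
    rw [← RingHom.comp_apply, hchi]; exact hPsi
  have hkey : ∀ u : ZMod 8, (ZMod.castHom (by norm_num : (2 : ℕ) ∣ 8) (ZMod 2)) u ≠ 0 →
      u * 4 ≠ 0 := by decide
  have := hkey (Phi s) hodd
  rw [map_mul, hf4] at h0
  exact this h0

/-- If `2 ∈ P` and `s·f ∈ P²` with `s ∉ P`, then `x ∈ P` and `y ∈ P`. -/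
lemma two_case {P : Ideal Bpoly} [P.IsPrime] (h2 : (2 : Bpoly) ∈ P) {s : Bpoly}
    (hs : s ∉ P) (hsf : s * fpoly ∈ P ^ 2) : X 0 ∈ P ∧ X 1 ∈ P := by
  have hP : P.IsPrime := ‹P.IsPrime›
  have hF : fpoly ∈ P := by
    have hsg : s * fpoly ∈ P := Ideal.pow_le_self two_ne_zero hsf
    exact (hP.mem_or_mem hsg).resolve_left hs
  have hone : (1 : Bpoly) ∉ P := fun h =>
    hP.ne_top ((Ideal.eq_top_iff_one P).2 h)
  have h3 : (3 : Bpoly) ∉ P := by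
    intro h
    have := P.sub_mem h h2
    norm_num at this
    exact hone this
  have h5 : (5 : Bpoly) ∉ P := by
    intro h
    have := P.sub_mem h (Ideal.mul_mem_right 2 P h2)
    norm_num at this
    exact hone this
  have hd1 : pderiv 1 fpoly ∈ P := sq_deriv hs hsf _
  rw [pd1] at hd1
  have hb : (4 * 5 ^ 7 * (X 1) ^ 3 * (X 1 - 2) ^ 3 : Bpoly) ∈ P := by
    have he : (4 * 5 ^ 7 * (X 1) ^ 3 * (X 1 - 2) ^ 3 : Bpoly) =
        2 * (2 * 5 ^ 7 * (X 1) ^ 3 * (X 1 - 2) ^ 3) := by ring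
    rw [he]
    exact Ideal.mul_mem_right _ P h2
  have ha : (3 * (5 ^ 7 * ((X 1) ^ 2 * (X 1 - 2) ^ 4)) : Bpoly) ∈ P := by
    have hsum := P.neg_mem hd1
    have := P.sub_mem (by simpa using hsum) hb
    have he : (3 * 5 ^ 7 * (X 1) ^ 2 * (X 1 - 2) ^ 4 +
        4 * 5 ^ 7 * (X 1) ^ 3 * (X 1 - 2) ^ 3 : Bpoly) -
        4 * 5 ^ 7 * (X 1) ^ 3 * (X 1 - 2) ^ 3 =
        3 * (5 ^ 7 * ((X 1) ^ 2 * (X 1 - 2) ^ 4)) := by ring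
    rwa [he] at this
  have h57 : (5 ^ 7 * ((X 1) ^ 2 * (X 1 - 2) ^ 4) : Bpoly) ∈ P :=
    (hP.mem_or_mem ha).resolve_left h3
  have hyy : ((X 1) ^ 2 * (X 1 - 2) ^ 4 : Bpoly) ∈ P := by
    rcases hP.mem_or_mem h57 with h | h
    · exact absurd (hP.mem_of_pow_mem 7 h) h5
    · exact h
  have hy : (X 1 : Bpoly) ∈ P := by
    rcases hP.mem_or_mem hyy with h | h
    · exact hP.mem_of_pow_mem 2 h
    · have hy2 : (X 1 - 2 : Bpoly) ∈ P := hP.mem_of_pow_mem 4 h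
      have := P.add_mem hy2 h2
      simpa using this
  have hyt : ((X 1) ^ 3 * 5 ^ 7 * (X 1 - 2) ^ 4 : Bpoly) ∈ P := by
    have he : ((X 1) ^ 3 * 5 ^ 7 * (X 1 - 2) ^ 4 : Bpoly) =
        X 1 * ((X 1) ^ 2 * 5 ^ 7 * (X 1 - 2) ^ 4) := by ring
    rw [he]
    exact Ideal.mul_mem_right _ P hy
  have hx2 : ((X 0) ^ 2 : Bpoly) ∈ P := by
    have he : ((X 0) ^ 2 : Bpoly) = fpoly + (X 1) ^ 3 * 5 ^ 7 * (X 1 - 2) ^ 4 := by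
      rw [fpoly]; ring
    rw [he]
    exact P.add_mem hF hyt
  exact ⟨hP.mem_of_pow_mem 2 hx2, hy⟩

end Poly

/-- The paper's Example 2.13 (here `x = X 0`, `y = X 1`): for every prime `P`
of `ℤ[x,y]`, `f = x² − y³·5⁷·(y−2)⁴` has order `≥ 2` at `P` iff `{x,y} ⊆ P` or
`{x,5} ⊆ P` or `{x,y−2} ⊆ P`, and never has order `≥ 3`.  Hence the maximal
order of `V(f)` is 2 and its maximal order locus is
`V(x,y) ∪ V(x,5) ∪ V(x,y−2)`, with `V(x,y)` and `V(x,y−2)` horizontal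
components and `V(x,5)` a vertical component above 5. -/
theorem maxOrd_locus_horizontal_and_vertical :
    ∀ (P : Ideal (MvPolynomial (Fin 2) ℤ)) [P.IsPrime],
      (hasOrderGE
          ((X 0) ^ 2 - (X 1) ^ 3 * 5 ^ 7 * (X 1 - 2) ^ 4 : MvPolynomial (Fin 2) ℤ)
          P 2 ↔
        (((X 0 : MvPolynomial (Fin 2) ℤ) ∈ P ∧ (X 1 : MvPolynomial (Fin 2) ℤ) ∈ P) ∨
          ((X 0 : MvPolynomial (Fin 2) ℤ) ∈ P ∧ (5 : MvPolynomial (Fin 2) ℤ) ∈ P) ∨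
          ((X 0 : MvPolynomial (Fin 2) ℤ) ∈ P ∧
            (X 1 - 2 : MvPolynomial (Fin 2) ℤ) ∈ P))) ∧
      ¬ hasOrderGE
          ((X 0) ^ 2 - (X 1) ^ 3 * 5 ^ 7 * (X 1 - 2) ^ 4 : MvPolynomial (Fin 2) ℤ)
          P 3 := by
  intro P hPinst
  have hP : P.IsPrime := hPinst
  have hFeq : ((X 0) ^ 2 - (X 1) ^ 3 * 5 ^ 7 * (X 1 - 2) ^ 4 : MvPolynomial (Fin 2) ℤ)
      = fpoly := rfl
  rw [hFeq]
  have hone : (1 : Bpoly) ∉ P := fun h =>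
    hP.ne_top ((Ideal.eq_top_iff_one P).2 h)
  constructor
  · rw [hasOrderGE_iff_aux]
    constructor
    · rintro ⟨s, hs, hsf⟩
      have hF : fpoly ∈ P := by
        have hsg : s * fpoly ∈ P := Ideal.pow_le_self two_ne_zero hsf
        exact (hP.mem_or_mem hsg).resolve_left hs
      by_cases h2 : (2 : Bpoly) ∈ P
      · exact Or.inl (two_case h2 hs hsf)
      · -- 2 ∉ P
        have hd0 : pderiv 0 fpoly ∈ P := sq_deriv hs hsf _
        rw [pd0] at hd0
        have hx : (X 0 : Bpoly) ∈ P := (hP.mem_or_mem hd0).resolve_left h2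
        have hu : ((X 1) ^ 3 * 5 ^ 7 * (X 1 - 2) ^ 4 : Bpoly) ∈ P := by
          have he : ((X 1) ^ 3 * 5 ^ 7 * (X 1 - 2) ^ 4 : Bpoly) =
              X 0 * X 0 - fpoly := by rw [fpoly]; ring
          rw [he]
          exact P.sub_mem (Ideal.mul_mem_right _ P hx) hF
        rcases hP.mem_or_mem hu with h | h
        · rcases hP.mem_or_mem h with h' | h'
          · exact Or.inl ⟨hx, hP.mem_of_pow_mem 3 h'⟩
          · exact Or.inr (Or.inl ⟨hx, hP.mem_of_pow_mem 7 h'⟩)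
        · exact Or.inr (Or.inr ⟨hx, hP.mem_of_pow_mem 4 h⟩)
    · rintro (⟨hx, hg⟩ | ⟨hx, hg⟩ | ⟨hx, hg⟩) <;>
      · refine ⟨1, hone, ?_⟩
        rw [one_mul]
        have hx2 : ((X 0) ^ 2 : Bpoly) ∈ P ^ 2 := by
          rw [pow_two, pow_two]
          exact Ideal.mul_mem_mul hx hx
        refine (P ^ 2).sub_mem hx2 ?_
        first
        | · have he : ((X 1) ^ 3 * 5 ^ 7 * (X 1 - 2) ^ 4 : Bpoly) =
                X 1 * X 1 * (X 1 * 5 ^ 7 * (X 1 - 2) ^ 4) := by ring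
            rw [he]; exact mem_sq_of_mul hg hg
        | · have he : ((X 1) ^ 3 * 5 ^ 7 * (X 1 - 2) ^ 4 : Bpoly) =
                5 * 5 * ((X 1) ^ 3 * 5 ^ 5 * (X 1 - 2) ^ 4) := by ring
            rw [he]; exact mem_sq_of_mul hg hg
        | · have he : ((X 1) ^ 3 * 5 ^ 7 * (X 1 - 2) ^ 4 : Bpoly) =
                (X 1 - 2) * (X 1 - 2) * ((X 1) ^ 3 * 5 ^ 7 * (X 1 - 2) ^ 2) := by ring
            rw [he]; exact mem_sq_of_mul hg hg
  · rw [hasOrderGE_iff_aux]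
    rintro ⟨s, hs, hsf⟩
    have h2 : (2 : Bpoly) ∈ P := by
      have := second_deriv_mem hs hsf (pderiv 0) (pderiv 0)
      convert this using 1
      exact pd00.symm
    have hsf2 : s * fpoly ∈ P ^ 2 := Ideal.pow_le_pow_right (by norm_num) hsf
    obtain ⟨hx, hy⟩ := two_case h2 hs hsf2
    have hPm : P = mIdeal := P_eq_m P h2 hx hy
    rw [hPm] at hsf hs
    exact not_sf_mem_m_cubed s hs hsf
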